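/- arXiv:1802.01152 — 2 statements merged into one kernel-verified Lean document; each statement's English description precedes it below -/
import Mathlib

section
/- Let (X, d) be a separable metric space and let μ₁ and μ₂ be Borel probability measures on X. For a Borel probability measure μ and t ≥ 0 write B_t(x) = {x' ∈ X : d(x, x') ≤ t} for the closed metric ball. Suppose that for every natural number r, the pushforward of the (r+1)-fold product measure μ₁^{⊗(r+1)} under the map (x, x₁, …, x_r) ↦ (d(x, x₁), …, d(x, x_r)) ∈ ℝ^r equals the pushforward of μ₂^{⊗(r+1)} under the same map. Then for every natural number m and all t₁, …, t_m ≥ 0, the pushforward of μ₁ under the map x ↦ (μ₁(B_{t₁}(x)), …, μ₁(B_{t_m}(x))) ∈ ℝ^m equals the pushforward of μ₂ under the map x ↦ (μ₂(B_{t₁}(x)), …, μ₂(B_{t_m}(x))). (The finite-dimensional distributions of the process S_μ(t) = μ(B_t(X)), X ∼ μ, are determined by the joint distributions of the distance sequences.) -/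
/-!
Write `S_j(x) = μ(B_{t_j}(x))`. By Tonelli, a mixed moment `∫ ∏ⱼ S_j ^ d_j dμ` is the probability
that `∑ⱼ d_j` independent samples lie within prescribed distances of an independent point `x`,
so it is read off the law of the distance vector. The vector `(S_j(X))ⱼ` lives in the cube
`[0, 1]^m`, and a finite measure carried by a compact subset of `ℝ^m` is determined by its moments
because polynomials are dense in its continuous functions (Stone–Weierstrass).
-/

open MeasureTheory Set

theorem exists_prod_fin_comp_eq_prod_pow {ι : Type*} [Fintype ι] (M : Type*) [CommMonoid M]
    (d : ι → ℕ) : ∃ (r : ℕ) (c : Fin r → ι), ∀ a : ι → M, ∏ k, a (c k) = ∏ i, a i ^ d i := by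
  refine ⟨_, fun k => ((Fintype.equivFin ((i : ι) × Fin (d i))).symm k).1, fun a => ?_⟩
  calc ∏ k, a ((Fintype.equivFin ((i : ι) × Fin (d i))).symm k).1
      = ∏ p : (i : ι) × Fin (d i), a p.1 := Equiv.prod_comp _ fun p : (i : ι) × Fin (d i) => a p.1
    _ = ∏ i, a i ^ d i := by simp [Fintype.prod_sigma]

section Moments

variable {X : Type*} [PseudoMetricSpace X] [SecondCountableTopology X]
  [MeasurableSpace X] [BorelSpace X]

theorem measurable_measure_setOf_dist_le (μ : Measure X) [SFinite μ] (s : ℝ) :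
    Measurable fun x => μ {x' | dist x x' ≤ s} :=
  measurable_measure_prodMk_left (isClosed_le continuous_dist continuous_const).measurableSet

/-- Tonelli: the product of the ball masses around `x` is the probability that independent
samples `xᵢ ∼ μ` land in the respective balls. -/
theorem lintegral_prod_measure_setOf_dist_le {ι : Type*} [Fintype ι] (μ : Measure X)
    [SigmaFinite μ] (s : ι → ℝ) :
    ∫⁻ x, ∏ i, μ {x' | dist x x' ≤ s i} ∂μ =
      Measure.map (fun p : X × (ι → X) => fun i => dist p.1 (p.2 i))
        (μ.prod (Measure.pi fun _ => μ)) (univ.pi fun i => Iic (s i)) := by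
  have hdist : Measurable fun p : X × (ι → X) => fun i => dist p.1 (p.2 i) := by fun_prop
  have hIic : MeasurableSet (univ.pi fun i => Iic (s i)) :=
    MeasurableSet.univ_pi fun _ => measurableSet_Iic
  rw [Measure.map_apply hdist hIic, Measure.prod_apply (hdist hIic)]
  refine lintegral_congr fun x => ?_
  have hslice : Prod.mk x ⁻¹' ((fun p : X × (ι → X) => fun i => dist p.1 (p.2 i)) ⁻¹'
      univ.pi fun i => Iic (s i)) = univ.pi fun i => {x' | dist x x' ≤ s i} := by
    ext; simp [Pi.le_def]
  rw [hslice, Measure.pi_pi]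

theorem lintegral_prod_pow_measure_setOf_dist_le_eq {ι : Type*} [Fintype ι]
    {μ₁ μ₂ : Measure X} [SigmaFinite μ₁] [SigmaFinite μ₂]
    (h : ∀ r : ℕ,
      Measure.map (fun p : X × (Fin r → X) => fun i : Fin r => dist p.1 (p.2 i))
        (μ₁.prod (Measure.pi fun _ : Fin r => μ₁)) =
      Measure.map (fun p : X × (Fin r → X) => fun i : Fin r => dist p.1 (p.2 i))
        (μ₂.prod (Measure.pi fun _ : Fin r => μ₂)))
    (t : ι → ℝ) (d : ι → ℕ) :
    ∫⁻ x, ∏ j, μ₁ {x' | dist x x' ≤ t j} ^ d j ∂μ₁ =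
      ∫⁻ x, ∏ j, μ₂ {x' | dist x x' ≤ t j} ^ d j ∂μ₂ := by
  obtain ⟨r, c, hc⟩ := exists_prod_fin_comp_eq_prod_pow ENNReal d
  simp only [← hc]
  rw [lintegral_prod_measure_setOf_dist_le, lintegral_prod_measure_setOf_dist_le, h]

theorem measurable_pi_measure_setOf_dist_le_toReal {ι : Type*} [Fintype ι] (μ : Measure X)
    [SFinite μ] (t : ι → ℝ) :
    Measurable fun x j => (μ {x' | dist x x' ≤ t j}).toReal :=
  measurable_pi_lambda _ fun j => (measurable_measure_setOf_dist_le μ (t j)).ennreal_toReal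

theorem integral_prod_pow_map_measure_setOf_dist_le_toReal {ι : Type*} [Fintype ι]
    (μ : Measure X) [IsFiniteMeasure μ] (t : ι → ℝ) (d : ι → ℕ) :
    ∫ v, ∏ j, v j ^ d j ∂(μ.map fun x j => (μ {x' | dist x x' ≤ t j}).toReal) =
      (∫⁻ x, ∏ j, μ {x' | dist x x' ≤ t j} ^ d j ∂μ).toReal := by
  rw [integral_map (measurable_pi_measure_setOf_dist_le_toReal μ t).aemeasurable
    (Finset.measurable_prod _ fun j _ => (measurable_pi_apply j).pow_const _).aestronglyMeasurable,
    ← integral_toReal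
    (Finset.measurable_prod _ fun j _ =>
      (measurable_measure_setOf_dist_le μ (t j)).pow_const _).aemeasurable
    (ae_of_all _ fun x => ENNReal.prod_lt_top fun j _ => by finiteness)]
  simp [ENNReal.toReal_prod]

theorem ae_mem_Icc_map_measure_setOf_dist_le_toReal {ι : Type*} [Fintype ι] (μ : Measure X)
    [IsProbabilityMeasure μ] (t : ι → ℝ) :
    ∀ᵐ v ∂(μ.map fun x j => (μ {x' | dist x x' ≤ t j}).toReal), v ∈ Icc 0 1 :=
  (ae_map_iff (measurable_pi_measure_setOf_dist_le_toReal μ t).aemeasurable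
    measurableSet_Icc).2 (ae_of_all _ fun _ => ⟨fun _ => ENNReal.toReal_nonneg,
      fun _ => measureReal_le_one⟩)

end Moments

theorem ContinuousMap.continuous_integral {K : Type*} [TopologicalSpace K] [CompactSpace K]
    [MeasurableSpace K] [BorelSpace K] (ν : Measure K) [IsFiniteMeasure ν] :
    Continuous fun g : C(K, ℝ) => ∫ x, g x ∂ν := by
  have : (fun g : C(K, ℝ) => ∫ x, g x ∂ν) = fun g => ∫ x, ContinuousMap.toLp 1 ν ℝ g x ∂ν :=
    funext fun g => integral_congr_ae (ContinuousMap.coeFn_toLp ν g).symm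
  rw [this]
  exact MeasureTheory.continuous_integral.comp (ContinuousMap.toLp 1 ν ℝ).continuous

theorem MeasureTheory.ext_of_forall_mem_subalgebra_integral_eq_of_compactSpace {K : Type*}
    [TopologicalSpace K] [CompactSpace K] [HasOuterApproxClosed K] [MeasurableSpace K]
    [BorelSpace K] {ν₁ ν₂ : Measure K} [IsFiniteMeasure ν₁] [IsFiniteMeasure ν₂]
    {A : Subalgebra ℝ C(K, ℝ)} (hA : A.SeparatesPoints)
    (h : ∀ g ∈ A, ∫ x, g x ∂ν₁ = ∫ x, g x ∂ν₂) : ν₁ = ν₂ := by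
  refine ext_of_forall_integral_eq_of_IsFiniteMeasure fun f => ?_
  have hclosed : IsClosed {g : C(K, ℝ) | ∫ x, g x ∂ν₁ = ∫ x, g x ∂ν₂} :=
    isClosed_eq (ContinuousMap.continuous_integral ν₁) (ContinuousMap.continuous_integral ν₂)
  have hdense : f.toContinuousMap ∈ A.topologicalClosure := by
    rw [ContinuousMap.subalgebra_topologicalClosure_eq_top_of_separatesPoints A hA]
    trivial
  exact closure_minimal h hclosed hdense

noncomputable def mvPolynomialFunctions {ι : Type*} (s : Set (ι → ℝ)) : Subalgebra ℝ C(s, ℝ) :=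
  (MvPolynomial.aeval fun i =>
    (⟨fun v => (v : ι → ℝ) i, (continuous_apply i).comp continuous_subtype_val⟩ : C(s, ℝ))).range

theorem exists_eval_of_mem_mvPolynomialFunctions {ι : Type*} {s : Set (ι → ℝ)} {g : C(s, ℝ)}
    (hg : g ∈ mvPolynomialFunctions s) :
    ∃ q : MvPolynomial ι ℝ, ∀ v : s, g v = MvPolynomial.eval (v : ι → ℝ) q := by
  obtain ⟨q, rfl⟩ := hg
  exact ⟨q, fun v => MvPolynomial.comp_aeval_apply _ (ContinuousMap.evalAlgHom ℝ ℝ v) q⟩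

theorem mvPolynomialFunctions_separatesPoints {ι : Type*} (s : Set (ι → ℝ)) :
    (mvPolynomialFunctions s).SeparatesPoints := by
  intro v w hvw
  obtain ⟨i, hi⟩ := Function.ne_iff.mp (Subtype.coe_ne_coe.mpr hvw)
  exact ⟨_, ⟨_, ⟨MvPolynomial.X i, rfl⟩, rfl⟩, by simpa [mvPolynomialFunctions] using hi⟩

theorem integral_eval_eq_sum_coeff_mul_integral_monomial {ι : Type*} [Fintype ι]
    {ν : Measure (ι → ℝ)} (hν : ∀ d : ι →₀ ℕ, Integrable (fun v => ∏ i, v i ^ d i) ν)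
    (q : MvPolynomial ι ℝ) :
    ∫ v, MvPolynomial.eval v q ∂ν =
      ∑ d ∈ q.support, MvPolynomial.coeff d q * ∫ v, ∏ i, v i ^ d i ∂ν := by
  simp_rw [MvPolynomial.eval_eq']
  rw [integral_finsetSum _ fun d _ => (hν d).const_mul _]
  simp_rw [integral_const_mul]

theorem MeasureTheory.ext_of_forall_integral_monomial_eq {ι : Type*} [Fintype ι]
    {s : Set (ι → ℝ)} (hs : IsCompact s) {ν₁ ν₂ : Measure (ι → ℝ)}
    [IsFiniteMeasure ν₁] [IsFiniteMeasure ν₂] (h₁ : ∀ᵐ v ∂ν₁, v ∈ s) (h₂ : ∀ᵐ v ∂ν₂, v ∈ s)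
    (h : ∀ d : ι → ℕ, ∫ v, ∏ i, v i ^ d i ∂ν₁ = ∫ v, ∏ i, v i ^ d i ∂ν₂) : ν₁ = ν₂ := by
  have hsm : MeasurableSet s := hs.isClosed.measurableSet
  have : CompactSpace s := isCompact_iff_compactSpace.mp hs
  have hmono : ∀ (ν : Measure (ι → ℝ)) [IsFiniteMeasure ν], (∀ᵐ v ∂ν, v ∈ s) →
      ∀ d : ι →₀ ℕ, Integrable (fun v => ∏ i, v i ^ d i) ν := fun ν _ hν d => by
    rw [← Measure.restrict_eq_self_of_ae_mem hν]
    exact (Continuous.continuousOn (by fun_prop)).integrableOn_compact hs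
  have hpoly : ∀ q, ∫ v, MvPolynomial.eval v q ∂ν₁ = ∫ v, MvPolynomial.eval v q ∂ν₂ := by
    intro q
    simp only [integral_eval_eq_sum_coeff_mul_integral_monomial (hmono ν₁ h₁),
      integral_eval_eq_sum_coeff_mul_integral_monomial (hmono ν₂ h₂), h]
  have hcomap : ν₁.comap ((↑) : s → ι → ℝ) = ν₂.comap (↑) := by
    refine ext_of_forall_mem_subalgebra_integral_eq_of_compactSpace
      (mvPolynomialFunctions_separatesPoints s) fun g hg => ?_
    obtain ⟨q, hq⟩ := exists_eval_of_mem_mvPolynomialFunctions hg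
    simp only [hq, integral_subtype_comap hsm fun v => MvPolynomial.eval v q,
      Measure.restrict_eq_self_of_ae_mem h₁, Measure.restrict_eq_self_of_ae_mem h₂, hpoly]
  rw [← Measure.restrict_eq_self_of_ae_mem h₁, ← Measure.restrict_eq_self_of_ae_mem h₂,
    ← map_comap_subtype_coe hsm, ← map_comap_subtype_coe hsm, hcomap]

/-- The finite-dimensional distributions of the process `S_μ(t) = μ(B_t(X))`, `X ∼ μ`,
are determined by the joint distributions of the distance sequences. -/
theorem distance_matrix_determines_fdds
    {X : Type*} [MetricSpace X] [TopologicalSpace.SeparableSpace X]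
    [MeasurableSpace X] [BorelSpace X]
    (μ₁ μ₂ : Measure X) [IsProbabilityMeasure μ₁] [IsProbabilityMeasure μ₂]
    (h : ∀ r : ℕ,
      Measure.map (fun p : X × (Fin r → X) => fun i : Fin r => dist p.1 (p.2 i))
        (μ₁.prod (Measure.pi fun _ : Fin r => μ₁)) =
      Measure.map (fun p : X × (Fin r → X) => fun i : Fin r => dist p.1 (p.2 i))
        (μ₂.prod (Measure.pi fun _ : Fin r => μ₂))) :
    ∀ (m : ℕ) (t : Fin m → ℝ), (∀ j, 0 ≤ t j) →
      Measure.map (fun x : X => fun j : Fin m => (μ₁ {x' : X | dist x x' ≤ t j}).toReal) μ₁ =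
      Measure.map (fun x : X => fun j : Fin m => (μ₂ {x' : X | dist x x' ≤ t j}).toReal) μ₂ := by
  intro m t _
  refine ext_of_forall_integral_monomial_eq isCompact_Icc
    (ae_mem_Icc_map_measure_setOf_dist_le_toReal μ₁ t)
    (ae_mem_Icc_map_measure_setOf_dist_le_toReal μ₂ t) fun d => ?_
  rw [integral_prod_pow_map_measure_setOf_dist_le_toReal,
    integral_prod_pow_map_measure_setOf_dist_le_toReal,
    lintegral_prod_pow_measure_setOf_dist_le_eq h]
end

section
/- Let (X, d) be a Polish (separable, completely metrizable) metric space and let μ₁ and μ₂ be Borel probability measures on X, each doubling: for j = 1, 2 there exists a finite constant k_j > 0 such that μ_j(B_{2ε}(x)) ≤ k_j μ_j(B_ε(x)) for all ε > 0 and x ∈ X. If μ₁(B) = μ₂(B) for every metric ball B in X, then μ₁(E) = μ₂(E) for every Borel set E ⊆ X; that is, μ₁ = μ₂. -/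
open MeasureTheory Metric Filter Topology

/-!
A doubling measure carries a Vitali family whose sets at `x` include the closed balls
`closedBall x r`, `r > 0`. If `μ(B) ≤ ν(B)` on all these balls, the covering argument behind
differentiation along a Vitali family yields `μ ≤ ν` on every set. Applied to two probability
measures agreeing on balls, this gives `μ₁ ≤ μ₂`, and equal total mass forces `μ₁ = μ₂`.
-/

lemma IsUnifLocDoublingMeasure.of_forall_measure_closedBall_two_mul_le {X : Type*}
    [PseudoMetricSpace X] [MeasurableSpace X] {μ : Measure X} (k : NNReal)
    (hdouble : ∀ ε : ℝ, 0 < ε → ∀ x : X,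
      μ (closedBall x (2 * ε)) ≤ (k : ENNReal) * μ (closedBall x ε)) :
    IsUnifLocDoublingMeasure μ :=
  ⟨⟨k, eventually_mem_nhdsWithin.mono hdouble⟩⟩

lemma MeasureTheory.Measure.le_of_forall_measure_closedBall_le {X : Type*} [PseudoMetricSpace X]
    [SecondCountableTopology X] [MeasurableSpace X] [BorelSpace X] {μ ν : Measure X}
    [IsUnifLocDoublingMeasure μ] [IsLocallyFiniteMeasure μ] [IsLocallyFiniteMeasure ν]
    (h : ∀ (x : X) (r : ℝ), 0 < r → μ (closedBall x r) ≤ ν (closedBall x r)) : μ ≤ ν := by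
  intro s
  refine (IsUnifLocDoublingMeasure.vitaliFamily μ 1).measure_le_of_frequently_le ν
    AbsolutelyContinuous.rfl s fun x _ => ?_
  have pos : ∀ᶠ r in 𝓝[>] (0 : ℝ), 0 < r := self_mem_nhdsWithin
  have balls_tendsto : Tendsto (closedBall x) (𝓝[>] (0 : ℝ))
      ((IsUnifLocDoublingMeasure.vitaliFamily μ 1).filterAt x) :=
    IsUnifLocDoublingMeasure.tendsto_closedBall_filterAt μ (fun _ => x) id tendsto_id
      (pos.mono fun r hr => by simpa using mem_closedBall_self (x := x) hr.le)
  exact balls_tendsto.frequently (pos.mono (h x)).frequently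

theorem doubling_measures_eq_of_agree_on_balls_general
    {X : Type*} [MetricSpace X] [TopologicalSpace.SeparableSpace X]
    [MeasurableSpace X] [BorelSpace X]
    (μ₁ μ₂ : Measure X) [IsProbabilityMeasure μ₁] [IsProbabilityMeasure μ₂]
    (k₁ : NNReal)
    (hdouble₁ : ∀ ε : ℝ, 0 < ε → ∀ x : X,
      μ₁ (Metric.closedBall x (2 * ε)) ≤ (k₁ : ENNReal) * μ₁ (Metric.closedBall x ε))
    (hball : ∀ (x : X) (r : ℝ), μ₁ (Metric.closedBall x r) = μ₂ (Metric.closedBall x r)) :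
    μ₁ = μ₂ := by
  have := IsUnifLocDoublingMeasure.of_forall_measure_closedBall_two_mul_le k₁ hdouble₁
  exact Measure.eq_of_le_of_isProbabilityMeasure
    (Measure.le_of_forall_measure_closedBall_le fun x r _ => (hball x r).le)

/-- On a Polish metric space, two doubling Borel probability measures that agree on all metric
balls are equal. -/
theorem doubling_measures_eq_of_agree_on_balls
    {X : Type*} [MetricSpace X] [TopologicalSpace.SeparableSpace X] [CompleteSpace X]
    [MeasurableSpace X] [BorelSpace X]
    (μ₁ μ₂ : Measure X) [IsProbabilityMeasure μ₁] [IsProbabilityMeasure μ₂]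
    (k₁ k₂ : NNReal) (hk₁ : 0 < k₁) (hk₂ : 0 < k₂)
    (hdouble₁ : ∀ ε : ℝ, 0 < ε → ∀ x : X,
      μ₁ (Metric.closedBall x (2 * ε)) ≤ (k₁ : ENNReal) * μ₁ (Metric.closedBall x ε))
    (hdouble₂ : ∀ ε : ℝ, 0 < ε → ∀ x : X,
      μ₂ (Metric.closedBall x (2 * ε)) ≤ (k₂ : ENNReal) * μ₂ (Metric.closedBall x ε))
    (hball : ∀ (x : X) (r : ℝ), μ₁ (Metric.closedBall x r) = μ₂ (Metric.closedBall x r)) :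
    μ₁ = μ₂ :=
  doubling_measures_eq_of_agree_on_balls_general μ₁ μ₂ k₁ hdouble₁ hball
end
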